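/- Let Γ be a cancellation monoid with neutral element e which carries a total ordering ≺ compatible with the monoid operation (γ₁ ≺ γ₂ implies γγ₁ ≺ γγ₂ and γ₁γ ≺ γ₂γ for all γ), such that e is the smallest element of Γ. Let A be a Γ-graded local ring and M a finitely generated Γ-graded A-module. Then for every γ ∈ Γ, any two minimal homogeneous generating sets of M contain the same number of homogeneous elements of degree γ. -/

import Mathlib

/-!
Since `0` is the least degree, `i + j = 0` forces `i = j = 0`, so taking degree-`0` components is
a ring homomorphism `A → A₀`; composed with the residue map of the local ring `A₀` it gives a
surjection `φ : A → k` onto a division ring, through which `A` acts on `M ⧸ (ker φ) M`.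
For a minimal homogeneous generating set `Ω`, the images of its degree-`γ` elements form a
`k`-basis of the span of the image of `M_γ`. They span: in the degree-`γ` component of `a • x`,
with `x ∈ Ω` of another degree, the coefficient of `x` has nonzero degree and so lies in `ker φ`.
They are independent by graded Nakayama: if `x ∈ Ω` lies in `span (Ω \ {x}) + (ker φ) M`, then
comparing components of degree `deg x` gives `(1 - c) • x ∈ span (Ω \ {x})` with `c` a nonunit
of `A₀`, so `Ω \ {x}` already generates `M`. Hence the number of degree-`γ` elements of `Ω` is the
`k`-dimension of that space.
-/

open DirectSum

namespace IsLocalRing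

variable (R : Type*) [Ring R] [IsLocalRing R]

instance : IsDedekindFiniteMonoid R where
  mul_eq_one_symm {a b} hab := by
    -- `b * a` is idempotent, and a local ring has no idempotents besides `0` and `1`.
    have idem : b * a * (b * a) = b * a * 1 := by
      rw [mul_one, mul_assoc, ← mul_assoc a, hab, one_mul]
    refine (isUnit_or_isUnit_of_add_one (add_sub_cancel (b * a) 1)).elim
      (·.mul_left_cancel idem) fun hu ↦ absurd hab ?_
    have hba : b * a = 0 := hu.mul_left_cancel (by noncomm_ring [idem])
    have ha : a = 0 := calc
      a = a * (b * a) := by rw [← mul_assoc, hab, one_mul]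
      _ = 0 := by rw [hba, mul_zero]
    simp [ha]

-- `IsLocalRing.maximalIdeal` is only defined for commutative rings.
def nonunitsIdeal : Ideal R where
  __ := nonunitsAddSubmonoid R
  smul_mem' _ _ := mt isUnit_of_mul_isUnit_right

instance : (nonunitsIdeal R).IsTwoSided := ⟨fun _ ↦ mt isUnit_of_mul_isUnit_left⟩

instance : Nontrivial (R ⧸ nonunitsIdeal R) :=
  Ideal.Quotient.nontrivial_iff.mpr <| (Ideal.ne_top_iff_one _).mpr (not_not.mpr isUnit_one)

noncomputable instance : DivisionRing (R ⧸ nonunitsIdeal R) :=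
  DivisionRing.ofIsUnitOrEqZero fun a ↦ by
    obtain ⟨r, rfl⟩ := Ideal.Quotient.mk_surjective a
    by_cases hr : IsUnit r
    · exact .inl (hr.map _)
    · exact .inr (Ideal.Quotient.eq_zero_iff_mem.mpr hr)

end IsLocalRing

namespace GradedRing

variable {ι A σ : Type*} [DecidableEq ι] [AddMonoid ι] [Semiring A] [SetLike σ A]
  [AddSubmonoidClass σ A] (𝒜 : ι → σ) [GradedRing 𝒜]

theorem coe_decompose_mul_zero_of_add_eq_zero (h : ∀ i j : ι, i + j = 0 → i = 0 ∧ j = 0)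
    (a b : A) : (decompose 𝒜 (a * b) 0 : A) = decompose 𝒜 a 0 * decompose 𝒜 b 0 := by
  induction a using DirectSum.Decomposition.inductionOn 𝒜 with
  | zero => simp
  | add a a' ha ha' =>
    simp only [add_mul, decompose_add, DirectSum.add_apply, AddMemClass.coe_add, ha, ha']
  | @homogeneous i a =>
    induction b using DirectSum.Decomposition.inductionOn 𝒜 with
    | zero => simp
    | add b b' hb hb' =>
      simp only [mul_add, decompose_add, DirectSum.add_apply, AddMemClass.coe_add, hb, hb']
    | @homogeneous j b =>
      have hab := SetLike.GradedMul.mul_mem a.2 b.2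
      by_cases hij : i + j = 0
      · obtain ⟨rfl, rfl⟩ := h i j hij
        rw [zero_add] at hab
        rw [decompose_of_mem_same 𝒜 a.2, decompose_of_mem_same 𝒜 b.2,
          decompose_of_mem_same 𝒜 hab]
      · rw [decompose_of_mem_ne 𝒜 hab hij]
        by_cases hi : i = 0
        · subst hi
          rw [zero_add] at hij
          rw [decompose_of_mem_ne 𝒜 b.2 hij, mul_zero]
        · rw [decompose_of_mem_ne 𝒜 a.2 hi, zero_mul]

/-- A version of `GradedRing.projZeroRingHom'` for index monoids that need not be commutative. -/
def projZeroRingHomOfAddEqZero (h : ∀ i j : ι, i + j = 0 → i = 0 ∧ j = 0) : A →+* 𝒜 0 where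
  toFun a := decompose 𝒜 a 0
  map_one' := Subtype.ext <| decompose_of_mem_same 𝒜 SetLike.GradedOne.one_mem
  map_zero' := by simp
  map_add' := by simp
  map_mul' a b := Subtype.ext <| coe_decompose_mul_zero_of_add_eq_zero 𝒜 h a b

end GradedRing

section GradedModule

variable {ι A M σA σM : Type*} [DecidableEq ι] [Semiring A] [AddCommMonoid M] [Module A M]
  [SetLike σA A] [AddSubmonoidClass σA A] [SetLike σM M] [AddSubmonoidClass σM M]
  (𝒜 : ι → σA) (ℳ : ι → σM) [Decomposition ℳ]

theorem DirectSum.decompose_smul_mem_span_singleton [AddMonoid ι] [GradedRing 𝒜]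
    [SetLike.GradedSMul 𝒜 ℳ] {m : M} {j : ι} (hm : m ∈ ℳ j) (a : A) (n : ι) :
    (decompose ℳ (a • m) n : M) ∈ A ∙ m := by
  induction a using DirectSum.Decomposition.inductionOn 𝒜 with
  | zero => simp
  | add a a' ha ha' =>
    rw [add_smul, decompose_add, DirectSum.add_apply, AddMemClass.coe_add]
    exact add_mem ha ha'
  | @homogeneous i a =>
    have ham : (a : A) • m ∈ ℳ (i + j) := SetLike.GradedSMul.smul_mem a.2 hm
    by_cases h : i + j = n
    · rw [decompose_of_mem_same ℳ (h ▸ ham)]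
      exact Submodule.smul_mem _ _ (Submodule.mem_span_singleton_self m)
    · rw [decompose_of_mem_ne ℳ ham h]
      exact zero_mem _

theorem DirectSum.coe_decompose_smul_add_of_right_mem [AddRightCancelMonoid ι] [GradedRing 𝒜]
    [SetLike.GradedSMul 𝒜 ℳ] {m : M} {i j : ι} (hm : m ∈ ℳ j) (a : A) :
    (decompose ℳ (a • m) (i + j) : M) = (decompose 𝒜 a i : A) • m := by
  induction a using DirectSum.Decomposition.inductionOn 𝒜 with
  | zero => simp
  | add a a' ha ha' =>
    simp only [add_smul, decompose_add, DirectSum.add_apply, AddMemClass.coe_add, ha, ha']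
  | @homogeneous k a =>
    have ham : (a : A) • m ∈ ℳ (k + j) := SetLike.GradedSMul.smul_mem a.2 hm
    by_cases h : k = i
    · subst h
      rw [decompose_of_mem_same ℳ ham, decompose_of_mem_same 𝒜 a.2]
    · rw [decompose_of_mem_ne ℳ ham (mt add_right_cancel h), decompose_of_mem_ne 𝒜 a.2 h,
        zero_smul]

theorem Submodule.isHomogeneous_span [AddMonoid ι] [GradedRing 𝒜] [SetLike.GradedSMul 𝒜 ℳ]
    {s : Set M} (hs : ∀ x ∈ s, SetLike.IsHomogeneousElem ℳ x) :
    (span A s).IsHomogeneous ℳ := by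
  intro n x hx
  induction hx using Submodule.span_induction generalizing n with
  | mem x hx =>
    obtain ⟨j, hj⟩ := hs x hx
    by_cases h : j = n
    · rw [decompose_of_mem_same ℳ (h ▸ hj)]
      exact subset_span hx
    · rw [decompose_of_mem_ne ℳ hj h]
      exact zero_mem _
  | zero => simp
  | add x y _ _ hx hy =>
    rw [decompose_add, DirectSum.add_apply, AddMemClass.coe_add]
    exact add_mem (hx n) (hy n)
  | smul a x _ hx =>
    classical
    rw [← sum_support_decompose ℳ x, Finset.smul_sum, decompose_sum, DFinsupp.finsetSum_apply,
      AddSubmonoidClass.coe_finsetSum]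
    refine sum_mem fun j _ ↦ ?_
    exact span_le.mpr (Set.singleton_subset_iff.mpr (hx j))
      (DirectSum.decompose_smul_mem_span_singleton 𝒜 ℳ (decompose ℳ x j).2 a n)

end GradedModule

namespace RingHom

variable {A k M : Type*} [Ring A] [Ring k] [AddCommGroup M] [Module A M] (φ : A →+* k)
  [RingHomSurjective φ]

local notation "Q" => M ⧸ (RingHom.ker φ • ⊤ : Submodule A M)

variable (M) in
noncomputable def quotientKerSMulTopAction : k →+* AddMonoid.End Q :=
  φ.liftOfRightInverse (Function.surjInv φ.surjective) (Function.rightInverse_surjInv φ.surjective)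
    ⟨Module.toAddMonoidEnd A Q, fun a ha ↦ by
      ext m
      induction m using Submodule.Quotient.induction_on with
      | H m =>
        exact (Submodule.Quotient.mk_eq_zero _).mpr
          (Submodule.smul_mem_smul ha (Submodule.mem_top : m ∈ (⊤ : Submodule A M)))⟩

noncomputable instance : Module k Q := Module.compHom Q (quotientKerSMulTopAction M φ)

theorem apply_smul_quotient (a : A) (q : Q) : φ a • q = a • q := by
  show quotientKerSMulTopAction M φ (φ a) q = _
  exact DFunLike.congr_fun (φ.liftOfRightInverse_comp_apply _ _ _ a) q

theorem mem_span_iff_mem_span_of_quotient {t : Set Q} {q : Q} :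
    q ∈ Submodule.span k t ↔ q ∈ Submodule.span A t := by
  refine ⟨fun hq ↦ ?_, fun hq ↦ ?_⟩
  · refine Submodule.span_induction (fun x hx ↦ Submodule.subset_span hx) (zero_mem _)
      (fun _ _ _ _ ↦ add_mem) (fun c q _ hq ↦ ?_) hq
    obtain ⟨a, rfl⟩ := φ.surjective c
    exact apply_smul_quotient φ a q ▸ Submodule.smul_mem _ a hq
  · exact Submodule.span_induction (fun x hx ↦ Submodule.subset_span hx) (zero_mem _)
      (fun _ _ _ _ ↦ add_mem)
      (fun a q _ hq ↦ apply_smul_quotient φ a q ▸ Submodule.smul_mem _ (φ a) hq) hq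

theorem mk_mem_span_image_mk_iff {s : Set M} {m : M} :
    (Submodule.Quotient.mk m : Q) ∈ Submodule.span k (Submodule.Quotient.mk '' s) ↔
      m ∈ Submodule.span A s ⊔ RingHom.ker φ • ⊤ := by
  rw [mem_span_iff_mem_span_of_quotient φ, ← Submodule.mkQ_apply,
    show Submodule.Quotient.mk '' s = (ker φ • ⊤ : Submodule A M).mkQ '' s from rfl,
    ← Submodule.map_span, ← Submodule.mem_comap, Submodule.comap_map_mkQ, sup_comm]

end RingHom

namespace GradedRing

variable {ι A σ : Type*} [DecidableEq ι] [AddMonoid ι] [Ring A] [SetLike σ A]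
  [AddSubgroupClass σ A] (𝒜 : ι → σ) [GradedRing 𝒜] [IsLocalRing (𝒜 0)]
  (h : ∀ i j : ι, i + j = 0 → i = 0 ∧ j = 0)

noncomputable def residue : A →+* 𝒜 0 ⧸ IsLocalRing.nonunitsIdeal (𝒜 0) :=
  (Ideal.Quotient.mk _).comp (projZeroRingHomOfAddEqZero 𝒜 h)

theorem residue_apply (a : A) :
    residue 𝒜 h a = Ideal.Quotient.mk _ (projZeroRingHomOfAddEqZero 𝒜 h a) := rfl

instance : RingHomSurjective (residue 𝒜 h) where
  is_surjective q := by
    obtain ⟨r, rfl⟩ := Ideal.Quotient.mk_surjective q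
    exact ⟨r, by rw [residue_apply]; congr 1; exact Subtype.ext (decompose_of_mem_same 𝒜 r.2)⟩

variable {𝒜} in
theorem residue_eq_zero_of_mem {a : A} {i : ι} (ha : a ∈ 𝒜 i) (hi : i ≠ 0) :
    residue 𝒜 h a = 0 := by
  rw [residue_apply, show projZeroRingHomOfAddEqZero 𝒜 h a = 0 from
    Subtype.ext (decompose_of_mem_ne 𝒜 ha hi), map_zero]

theorem isUnit_coe_decompose_zero_of_residue_ne_zero {a : A} (ha : residue 𝒜 h a ≠ 0) :
    IsUnit (decompose 𝒜 a 0 : A) := by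
  have hu : IsUnit (decompose 𝒜 a 0) := by
    by_contra hnu
    exact ha (Ideal.Quotient.eq_zero_iff_mem.mpr hnu)
  exact hu.map (SetLike.GradeZero.subring 𝒜).subtype

end GradedRing

section Spanning

open GradedRing

variable {ι A M σA σM : Type*} [DecidableEq ι] [AddMonoid ι] [Ring A] [AddCommGroup M]
  [Module A M] [SetLike σA A] [AddSubgroupClass σA A] [SetLike σM M] [AddSubmonoidClass σM M]
  (𝒜 : ι → σA) (ℳ : ι → σM) [GradedRing 𝒜] [Decomposition ℳ] [SetLike.GradedSMul 𝒜 ℳ]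
  [IsLocalRing (𝒜 0)] (h : ∀ i j : ι, i + j = 0 → i = 0 ∧ j = 0) {s : Set M}

theorem decompose_smul_mem_span_sep_sup {g : M} (hgs : g ∈ s) {i : ι} (hg : g ∈ ℳ i) (j : ι)
    (a : A) : (decompose ℳ (a • g) j : M) ∈
      Submodule.span A {x ∈ s | x ∈ ℳ j} ⊔ RingHom.ker (residue 𝒜 h) • ⊤ := by
  induction a using DirectSum.Decomposition.inductionOn 𝒜 with
  | zero => simp
  | add a a' ha ha' =>
    rw [add_smul, decompose_add, DirectSum.add_apply, AddMemClass.coe_add]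
    exact add_mem ha ha'
  | @homogeneous l a =>
    have hag : (a : A) • g ∈ ℳ (l + i) := SetLike.GradedSMul.smul_mem a.2 hg
    by_cases hj : l + i = j
    · rw [decompose_of_mem_same ℳ (hj ▸ hag)]
      by_cases hl : l = 0
      · subst hl
        rw [zero_add] at hj
        subst hj
        exact Submodule.mem_sup_left (Submodule.smul_mem _ _ (Submodule.subset_span ⟨hgs, hg⟩))
      · exact Submodule.mem_sup_right
          (Submodule.smul_mem_smul (residue_eq_zero_of_mem h a.2 hl) Submodule.mem_top)
    · rw [decompose_of_mem_ne ℳ hag hj]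
      exact zero_mem _

theorem mem_span_sep_sup_of_mem (hs : ∀ x ∈ s, SetLike.IsHomogeneousElem ℳ x)
    (hspan : Submodule.span A s = ⊤) {v : M} {j : ι} (hv : v ∈ ℳ j) :
    v ∈ Submodule.span A {x ∈ s | x ∈ ℳ j} ⊔ RingHom.ker (residue 𝒜 h) • ⊤ := by
  suffices ∀ m : M, ∀ a : A, (decompose ℳ (a • m) j : M) ∈
      Submodule.span A {x ∈ s | x ∈ ℳ j} ⊔ RingHom.ker (residue 𝒜 h) • ⊤ by
    simpa [decompose_of_mem_same ℳ hv] using this v 1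
  intro m
  induction (hspan ▸ Submodule.mem_top : m ∈ Submodule.span A s) using Submodule.span_induction with
  | mem g hg =>
    obtain ⟨i, hi⟩ := hs g hg
    exact decompose_smul_mem_span_sep_sup 𝒜 ℳ h hg hi j
  | zero => simp
  | add m m' _ _ hm hm' =>
    intro a
    rw [smul_add, decompose_add, DirectSum.add_apply, AddMemClass.coe_add]
    exact add_mem (hm a) (hm' a)
  | smul b m _ hm =>
    intro a
    rw [smul_smul]
    exact hm (a * b)

end Spanning

section Independence

open GradedRing

variable {ι A M σA σM : Type*} [DecidableEq ι] [AddRightCancelMonoid ι] [Ring A] [AddCommGroup M]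
  [Module A M] [SetLike σA A] [AddSubgroupClass σA A] [SetLike σM M] [AddSubmonoidClass σM M]
  (𝒜 : ι → σA) (ℳ : ι → σM) [GradedRing 𝒜] [Decomposition ℳ] [SetLike.GradedSMul 𝒜 ℳ]
  [IsLocalRing (𝒜 0)] (h : ∀ i j : ι, i + j = 0 → i = 0 ∧ j = 0)

local notation "k" => 𝒜 0 ⧸ IsLocalRing.nonunitsIdeal (𝒜 0)
local notation "Q" => M ⧸ RingHom.ker (residue 𝒜 h) • (⊤ : Submodule A M)

theorem exists_decompose_sub_smul_mem {P : Submodule A M} (hP : P.IsHomogeneous ℳ) {x : M}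
    {j : ι} (hx : x ∈ ℳ j) (htop : P ⊔ A ∙ x = ⊤) {n : M}
    (hn : n ∈ RingHom.ker (residue 𝒜 h) • (⊤ : Submodule A M)) :
    ∃ c ∈ RingHom.ker (residue 𝒜 h), (decompose ℳ n j : M) - (decompose 𝒜 c 0 : A) • x ∈ P := by
  induction hn using Submodule.smul_induction_on' with
  | smul b hb m _ =>
    obtain ⟨p, hp, y, hy, rfl⟩ := Submodule.mem_sup.mp (htop ▸ Submodule.mem_top : m ∈ P ⊔ A ∙ x)
    obtain ⟨a, rfl⟩ := Submodule.mem_span_singleton.mp hy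
    refine ⟨b * a, Ideal.mul_mem_right _ _ hb, ?_⟩
    have hba := coe_decompose_smul_add_of_right_mem 𝒜 ℳ (i := 0) hx (b * a)
    rw [zero_add] at hba
    rw [smul_add, decompose_add, DirectSum.add_apply, AddMemClass.coe_add, smul_smul, hba,
      add_sub_cancel_right]
    exact hP j (P.smul_mem b hp)
  | add n _ n' _ hn hn' =>
    obtain ⟨c, hc, hcP⟩ := hn
    obtain ⟨c', hc', hc'P⟩ := hn'
    refine ⟨c + c', add_mem hc hc', ?_⟩
    convert add_mem hcP hc'P using 1
    simp only [decompose_add, DirectSum.add_apply, AddMemClass.coe_add, add_smul]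
    abel

theorem mem_of_mem_sup_ker_residue_smul_top {P : Submodule A M} (hP : P.IsHomogeneous ℳ) {x : M}
    {j : ι} (hx : x ∈ ℳ j) (htop : P ⊔ A ∙ x = ⊤)
    (hxP : x ∈ P ⊔ RingHom.ker (residue 𝒜 h) • (⊤ : Submodule A M)) : x ∈ P := by
  obtain ⟨p, hp, n, hn, hpn⟩ := Submodule.mem_sup.mp hxP
  obtain ⟨c, hc, hcP⟩ := exists_decompose_sub_smul_mem 𝒜 ℳ h hP hx htop hn
  have hx_eq : (decompose ℳ p j : M) + decompose ℳ n j = x := by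
    rw [← AddMemClass.coe_add, ← DirectSum.add_apply, ← decompose_add, hpn,
      decompose_of_mem_same ℳ hx]
  have hunit : IsUnit (decompose 𝒜 (1 - c) 0 : A) :=
    isUnit_coe_decompose_zero_of_residue_ne_zero 𝒜 h (by simp [RingHom.mem_ker.mp hc])
  rw [← Submodule.smul_mem_iff_of_isUnit P hunit, decompose_sub, DirectSum.sub_apply,
    AddSubgroupClass.coe_sub, decompose_of_mem_same 𝒜 SetLike.GradedOne.one_mem, sub_smul,
    one_smul]
  convert add_mem (hP j hp) hcP using 1
  rw [← hx_eq]
  abel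

variable {s : Set M} (hs : ∀ x ∈ s, SetLike.IsHomogeneousElem ℳ x)
  (hspan : Submodule.span A s = ⊤)
include hs hspan

theorem span_image_mk_sep_eq (j : ι) :
    Submodule.span k (Submodule.Quotient.mk '' {x ∈ s | x ∈ ℳ j} : Set Q) =
      Submodule.span k (Submodule.Quotient.mk '' (ℳ j : Set M)) := by
  refine le_antisymm (Submodule.span_mono (Set.image_mono fun x hx ↦ hx.2)) ?_
  rw [Submodule.span_le]
  rintro _ ⟨v, hv, rfl⟩
  exact (RingHom.mk_mem_span_image_mk_iff _).mpr (mem_span_sep_sup_of_mem 𝒜 ℳ h hs hspan hv)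

theorem linearIndependent_mk_sep (hmin : ∀ t ⊂ s, Submodule.span A t ≠ ⊤) (j : ι) :
    LinearIndependent k (fun x : {x ∈ s | x ∈ ℳ j} ↦ (Submodule.Quotient.mk (x : M) : Q)) := by
  rw [linearIndependent_iff_notMem_span]
  rintro ⟨x, hxs, hxj⟩ hx
  have hPx : Submodule.span A (s \ {x}) ⊔ A ∙ x = ⊤ := by
    rw [← Submodule.span_union, Set.sdiff_union_of_subset (Set.singleton_subset_iff.mpr hxs),
      hspan]
  have hx' : x ∈ Submodule.span A (s \ {x}) ⊔ RingHom.ker (residue 𝒜 h) • ⊤ := by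
    refine (RingHom.mk_mem_span_image_mk_iff _).mp (Submodule.span_mono ?_ hx)
    rintro _ ⟨⟨y, hys, _⟩, ⟨-, hyx⟩, rfl⟩
    exact ⟨y, ⟨hys, fun hyx' ↦ hyx (Subtype.ext hyx')⟩, rfl⟩
  have hxP := mem_of_mem_sup_ker_residue_smul_top 𝒜 ℳ h
    (Submodule.isHomogeneous_span 𝒜 ℳ fun y hy ↦ hs y hy.1) hxj hPx hx'
  refine hmin _ (Set.sdiff_singleton_ssubset.mpr hxs) (eq_top_iff.mpr ?_)
  rw [← hPx]
  exact sup_le le_rfl ((Submodule.span_singleton_le_iff_mem _ _).mpr hxP)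

theorem ncard_sep_eq_finrank (hmin : ∀ t ⊂ s, Submodule.span A t ≠ ⊤) (j : ι) :
    {x ∈ s | x ∈ ℳ j}.ncard =
      Module.finrank k (Submodule.span k (Submodule.Quotient.mk '' (ℳ j : Set M) : Set Q)) := by
  have b := Module.Basis.span (linearIndependent_mk_sep 𝒜 ℳ h hs hspan hmin j)
  rw [← span_image_mk_sep_eq 𝒜 ℳ h hs hspan, Set.image_eq_range, Module.finrank,
    ← b.mk_eq_rank'']
  rfl

end Independence

theorem minimal_homogeneous_generating_sets_same_number_in_each_degree
    {Γ : Type*} [AddCancelMonoid Γ] [LinearOrder Γ] [DecidableEq Γ]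
    [CovariantClass Γ Γ (· + ·) (· < ·)]
    (h0 : ∀ γ : Γ, 0 ≤ γ)
    {A : Type*} [Ring A] (𝒜 : Γ → AddSubgroup A) [GradedRing 𝒜]
    [IsLocalRing (𝒜 0)]
    {M : Type*} [AddCommGroup M] [Module A M]
    (ℳ : Γ → AddSubgroup M) [SetLike.GradedSMul 𝒜 ℳ] [DirectSum.Decomposition ℳ]
    (Ω₁ Ω₂ : Set M)
    (hΩ₁hom : ∀ x ∈ Ω₁, x ≠ 0 ∧ ∃ γ : Γ, x ∈ ℳ γ)
    (hΩ₁gen : Submodule.span A Ω₁ = ⊤)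
    (hΩ₁min : ∀ S ⊂ Ω₁, Submodule.span A S ≠ ⊤)
    (hΩ₂hom : ∀ x ∈ Ω₂, x ≠ 0 ∧ ∃ γ : Γ, x ∈ ℳ γ)
    (hΩ₂gen : Submodule.span A Ω₂ = ⊤)
    (hΩ₂min : ∀ S ⊂ Ω₂, Submodule.span A S ≠ ⊤) :
    ∀ γ : Γ, {x ∈ Ω₁ | x ∈ ℳ γ}.ncard = {x ∈ Ω₂ | x ∈ ℳ γ}.ncard := by
  have h (i j : Γ) (hij : i + j = 0) : i = 0 ∧ j = 0 := by
    have hj : j = 0 := by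
      by_contra hj
      exact (add_pos_of_nonneg_of_pos (h0 i) ((h0 j).lt_of_ne' hj)).ne' hij
    exact ⟨by simpa [hj] using hij, hj⟩
  intro γ
  rw [ncard_sep_eq_finrank 𝒜 ℳ h (fun x hx ↦ (hΩ₁hom x hx).2) hΩ₁gen hΩ₁min,
    ncard_sep_eq_finrank 𝒜 ℳ h (fun x hx ↦ (hΩ₂hom x hx).2) hΩ₂gen hΩ₂min]
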